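/- arXiv:math/0409343 — 2 statements merged into one kernel-verified Lean document; each statement's English description precedes it below -/
import Mathlib

section
/- Let T and T' be nondegenerate triangles in the Euclidean plane ℝ² such that every angle of T and of T' is at least α > 0, and suppose the corresponding side lengths of T and T' differ by ratios at most 1 + δ (i.e., for each pair of corresponding sides s, s' one has (1+δ)⁻¹ ≤ |s'|/|s| ≤ 1+δ). Then there is an L-bi-Lipschitz affine map of T onto T' with L depending only on α and δ, and L → 1 as δ → 0. -/
set_option maxHeartbeats 2000000
set_option linter.unnecessarySimpa false

open EuclideanGeometry Filter Topology
open scoped RealInnerProductSpace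

local notation "V2" => EuclideanSpace ℝ (Fin 2)

private lemma sin_lb' {α θ : ℝ} (hα0 : 0 < α) (h1 : α ≤ θ) (h2 : θ ≤ Real.pi - α) :
    Real.sin α ≤ Real.sin θ := by
  rcases le_or_gt θ (Real.pi / 2) with h | h
  · exact Real.sin_le_sin_of_le_of_le_pi_div_two (by linarith [Real.pi_pos]) h h1
  · rw [← Real.sin_pi_sub θ]
    exact Real.sin_le_sin_of_le_of_le_pi_div_two (by linarith [Real.pi_pos]) (by linarith)
      (by linarith)

private lemma abs_cos_le' {α θ : ℝ} (hα0 : 0 < α) (h1 : α ≤ θ) (h2 : θ ≤ Real.pi - α) :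
    |Real.cos θ| ≤ Real.cos α := by
  have hθ0 : 0 ≤ θ := by linarith
  have hup : Real.cos θ ≤ Real.cos α :=
    Real.cos_le_cos_of_nonneg_of_le_pi hα0.le (by linarith) h1
  have hlow : Real.cos (Real.pi - α) ≤ Real.cos θ :=
    Real.cos_le_cos_of_nonneg_of_le_pi hθ0 (by linarith) h2
  rw [Real.cos_pi_sub] at hlow
  exact abs_le.2 ⟨by linarith, hup⟩

private lemma sin_mul_norm_eq {V : Type*} [NormedAddCommGroup V] [InnerProductSpace ℝ V]
    (x y : V) (hy : y ≠ 0) :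
    Real.sin (InnerProductGeometry.angle x y) * ‖x‖ =
      Real.sin (InnerProductGeometry.angle (-y) (x - y)) * ‖x - y‖ := by
  have h1 := InnerProductGeometry.sin_angle_mul_norm_mul_norm x y
  have h2 := InnerProductGeometry.sin_angle_mul_norm_mul_norm (-y) (x - y)
  have hrad : inner ℝ x x * inner ℝ y y - inner ℝ x y * inner ℝ x y
      = (inner ℝ (-y) (-y) : ℝ) * inner ℝ (x - y) (x - y)
        - inner ℝ (-y) (x - y) * inner ℝ (-y) (x - y) := by
    simp only [inner_sub_left, inner_sub_right, inner_neg_left, inner_neg_right,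
      real_inner_comm x y]
    ring
  rw [hrad, ← h2, norm_neg] at h1
  have hy' : ‖y‖ ≠ 0 := norm_ne_zero_iff.2 hy
  have key : (Real.sin (InnerProductGeometry.angle x y) * ‖x‖) * ‖y‖ =
      (Real.sin (InnerProductGeometry.angle (-y) (x - y)) * ‖x - y‖) * ‖y‖ := by
    calc Real.sin (InnerProductGeometry.angle x y) * ‖x‖ * ‖y‖
        = Real.sin (InnerProductGeometry.angle x y) * (‖x‖ * ‖y‖) := by ring
      _ = Real.sin (InnerProductGeometry.angle (-y) (x - y)) * (‖y‖ * ‖x - y‖) := h1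
      _ = Real.sin (InnerProductGeometry.angle (-y) (x - y)) * ‖x - y‖ * ‖y‖ := by ring
  exact mul_right_cancel₀ hy' key

private lemma stepA' {p q r p' q' r' I I' ε : ℝ} (hp : 0 ≤ p) (hq : 0 ≤ q) (hε : 0 ≤ ε)
    (hr : 0 ≤ r) (hrpq : r ≤ p + q)
    (hIr : r ^ 2 = p ^ 2 - 2 * I + q ^ 2) (hIr' : r' ^ 2 = p' ^ 2 - 2 * I' + q' ^ 2)
    (h1 : |p' ^ 2 - p ^ 2| ≤ ε * p ^ 2) (h2 : |q' ^ 2 - q ^ 2| ≤ ε * q ^ 2)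
    (h3 : |r' ^ 2 - r ^ 2| ≤ ε * r ^ 2) :
    |I' - I| ≤ (3 / 2) * ε * (p ^ 2 + q ^ 2) := by
  have hr2 : r ^ 2 ≤ 2 * (p ^ 2 + q ^ 2) := by
    have := mul_le_mul hrpq hrpq hr (by linarith)
    nlinarith [sq_nonneg (p - q)]
  rw [abs_le] at h1 h2 h3 ⊢
  constructor <;> nlinarith [h1.1, h1.2, h2.1, h2.2, h3.1, h3.2,
    mul_le_mul_of_nonneg_left hr2 hε]

private lemma ratio_sq' {p p' δ : ℝ} (hp : 0 < p) (hδ : 0 < δ)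
    (hlo : (1 + δ)⁻¹ ≤ p' / p) (hhi : p' / p ≤ 1 + δ) :
    |p' ^ 2 - p ^ 2| ≤ ((1 + δ) ^ 2 - 1) * p ^ 2 ∧
      |p ^ 2 - p' ^ 2| ≤ ((1 + δ) ^ 2 - 1) * p' ^ 2 ∧ 0 < p' := by
  have hk : (1:ℝ) < 1 + δ := by linarith
  have hup : p' ≤ (1 + δ) * p := by
    rw [div_le_iff₀ hp] at hhi; linarith
  have hlo' : p ≤ (1 + δ) * p' := by
    rw [le_div_iff₀ hp, inv_mul_le_iff₀ (by linarith : (0:ℝ) < 1 + δ)] at hlo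
    linarith
  have hp' : 0 < p' := by nlinarith
  refine ⟨?_, ?_, hp'⟩ <;> rw [abs_le] <;> constructor <;> nlinarith

private lemma core' {p q p' q' I I' ε s c a b : ℝ} (hp : 0 ≤ p) (hq : 0 ≤ q) (hε : 0 ≤ ε)
    (hs : 0 < s) (hsq : s * q ≤ p) (hsp : s * p ≤ q)
    (hc : 0 ≤ c) (hc1 : c < 1) (hI : |I| ≤ c * (p * q))
    (h1 : |p' ^ 2 - p ^ 2| ≤ ε * p ^ 2) (h2 : |q' ^ 2 - q ^ 2| ≤ ε * q ^ 2)
    (hII : |I' - I| ≤ (3 / 2) * ε * (p ^ 2 + q ^ 2)) :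
    a ^ 2 * p' ^ 2 + 2 * a * b * I' + b ^ 2 * q' ^ 2 ≤
      (1 + (5 / 2) * (1 + (s⁻¹) ^ 2) / (1 - c) * ε) *
        (a ^ 2 * p ^ 2 + 2 * a * b * I + b ^ 2 * q ^ 2) := by
  have hc0 : (0:ℝ) < 1 - c := by linarith
  have ht : (0:ℝ) < s⁻¹ := by positivity
  have hq' : q ≤ s⁻¹ * p := by
    rw [← div_eq_inv_mul, le_div_iff₀ hs]; linarith
  have hp2 : p ≤ s⁻¹ * q := by
    rw [← div_eq_inv_mul, le_div_iff₀ hs]; linarith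
  have h1' : q ^ 2 ≤ (s⁻¹) ^ 2 * p ^ 2 := by
    nlinarith [mul_le_mul hq' hq' hq (by positivity : (0:ℝ) ≤ s⁻¹ * p)]
  have h2' : p ^ 2 ≤ (s⁻¹) ^ 2 * q ^ 2 := by
    nlinarith [mul_le_mul hp2 hp2 hp (by positivity : (0:ℝ) ≤ s⁻¹ * q)]
  have hMa : a ^ 2 * q ^ 2 ≤ a ^ 2 * ((s⁻¹) ^ 2 * p ^ 2) :=
    mul_le_mul_of_nonneg_left h1' (sq_nonneg a)
  have hMb : b ^ 2 * p ^ 2 ≤ b ^ 2 * ((s⁻¹) ^ 2 * q ^ 2) :=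
    mul_le_mul_of_nonneg_left h2' (sq_nonneg b)
  have hab : |2 * a * b| ≤ a ^ 2 + b ^ 2 := by
    rw [abs_le]; constructor <;> nlinarith [sq_nonneg (a + b), sq_nonneg (a - b)]
  have habI : |2 * a * b * (I' - I)| ≤ (a ^ 2 + b ^ 2) * ((3 / 2) * ε * (p ^ 2 + q ^ 2)) := by
    rw [abs_mul]
    exact mul_le_mul hab hII (abs_nonneg _) (by positivity)
  have hpq' : |2 * a * b| * (p * q) ≤ a ^ 2 * p ^ 2 + b ^ 2 * q ^ 2 := by
    rcases abs_cases (2 * a * b) with ⟨h, _⟩ | ⟨h, _⟩ <;> rw [h] <;>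
      nlinarith [sq_nonneg (a * p - b * q), sq_nonneg (a * p + b * q)]
  have hIm : |2 * a * b * I| ≤ c * (a ^ 2 * p ^ 2 + b ^ 2 * q ^ 2) := by
    calc |2 * a * b * I| = |2 * a * b| * |I| := abs_mul _ _
      _ ≤ |2 * a * b| * (c * (p * q)) := mul_le_mul_of_nonneg_left hI (abs_nonneg _)
      _ = c * (|2 * a * b| * (p * q)) := by ring
      _ ≤ c * (a ^ 2 * p ^ 2 + b ^ 2 * q ^ 2) := mul_le_mul_of_nonneg_left hpq' hc
  have hXD : (1 - c) * (a ^ 2 * p ^ 2 + b ^ 2 * q ^ 2) ≤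
      a ^ 2 * p ^ 2 + 2 * a * b * I + b ^ 2 * q ^ 2 := by
    have := neg_abs_le (2 * a * b * I)
    nlinarith
  rw [abs_le] at h1 h2
  have t1 : a ^ 2 * (p' ^ 2 - p ^ 2) ≤ a ^ 2 * (ε * p ^ 2) :=
    mul_le_mul_of_nonneg_left h1.2 (sq_nonneg a)
  have t2 : b ^ 2 * (q' ^ 2 - q ^ 2) ≤ b ^ 2 * (ε * q ^ 2) :=
    mul_le_mul_of_nonneg_left h2.2 (sq_nonneg b)
  have hMε : (3 / 2) * ε * (a ^ 2 * q ^ 2 + b ^ 2 * p ^ 2) ≤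
      (3 / 2) * ε * (a ^ 2 * ((s⁻¹) ^ 2 * p ^ 2) + b ^ 2 * ((s⁻¹) ^ 2 * q ^ 2)) := by
    apply mul_le_mul_of_nonneg_left (by linarith) (by positivity)
  have hup : (a ^ 2 * p' ^ 2 + 2 * a * b * I' + b ^ 2 * q' ^ 2) -
      (a ^ 2 * p ^ 2 + 2 * a * b * I + b ^ 2 * q ^ 2) ≤
      (5 / 2) * (1 + (s⁻¹) ^ 2) * ε * (a ^ 2 * p ^ 2 + b ^ 2 * q ^ 2) := by
    have hΔ := (abs_le.mp habI).2
    nlinarith [mul_nonneg (mul_nonneg hε (sq_nonneg s⁻¹))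
      (add_nonneg (mul_nonneg (sq_nonneg a) (sq_nonneg p))
        (mul_nonneg (sq_nonneg b) (sq_nonneg q)))]
  set F : ℝ := (5 / 2) * (1 + (s⁻¹) ^ 2) / (1 - c) * ε with hF
  have hF0 : 0 ≤ F := by positivity
  have hFc : F * (1 - c) = (5 / 2) * (1 + (s⁻¹) ^ 2) * ε := by
    rw [hF]; field_simp
  have hGD : (5 / 2) * (1 + (s⁻¹) ^ 2) * ε * (a ^ 2 * p ^ 2 + b ^ 2 * q ^ 2) ≤
      F * (a ^ 2 * p ^ 2 + 2 * a * b * I + b ^ 2 * q ^ 2) := by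
    calc (5 / 2) * (1 + (s⁻¹) ^ 2) * ε * (a ^ 2 * p ^ 2 + b ^ 2 * q ^ 2)
        = F * ((1 - c) * (a ^ 2 * p ^ 2 + b ^ 2 * q ^ 2)) := by rw [← hFc]; ring
      _ ≤ F * (a ^ 2 * p ^ 2 + 2 * a * b * I + b ^ 2 * q ^ 2) :=
          mul_le_mul_of_nonneg_left hXD hF0
  nlinarith [hup, hGD]

private lemma expand_sq {V : Type*} [NormedAddCommGroup V] [InnerProductSpace ℝ V]
    (x y : V) (a b : ℝ) :
    ‖a • x + b • y‖ ^ 2 = a ^ 2 * ‖x‖ ^ 2 + 2 * a * b * ⟪x, y⟫ + b ^ 2 * ‖y‖ ^ 2 := by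
  rw [← real_inner_self_eq_norm_sq]
  simp only [inner_add_left, inner_add_right, real_inner_smul_left, real_inner_smul_right]
  rw [← real_inner_self_eq_norm_sq x, ← real_inner_self_eq_norm_sq y, real_inner_comm y x]
  ring

private lemma quad_bound' {V : Type*} [NormedAddCommGroup V] [InnerProductSpace ℝ V]
    (u v u' v' : V) (ε s c : ℝ) (hε : 0 ≤ ε) (hs : 0 < s)
    (hsq : s * ‖v‖ ≤ ‖u‖) (hsp : s * ‖u‖ ≤ ‖v‖) (hc : 0 ≤ c) (hc1 : c < 1)
    (hI : |⟪u, v⟫| ≤ c * (‖u‖ * ‖v‖))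
    (h1 : |‖u'‖ ^ 2 - ‖u‖ ^ 2| ≤ ε * ‖u‖ ^ 2) (h2 : |‖v'‖ ^ 2 - ‖v‖ ^ 2| ≤ ε * ‖v‖ ^ 2)
    (h3 : |‖u' - v'‖ ^ 2 - ‖u - v‖ ^ 2| ≤ ε * ‖u - v‖ ^ 2) (a b : ℝ) :
    ‖a • u' + b • v'‖ ^ 2 ≤
      (1 + (5 / 2) * (1 + (s⁻¹) ^ 2) / (1 - c) * ε) * ‖a • u + b • v‖ ^ 2 := by
  have hIr : ‖u - v‖ ^ 2 = ‖u‖ ^ 2 - 2 * ⟪u, v⟫ + ‖v‖ ^ 2 := norm_sub_sq_real u v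
  have hIr' : ‖u' - v'‖ ^ 2 = ‖u'‖ ^ 2 - 2 * ⟪u', v'⟫ + ‖v'‖ ^ 2 := norm_sub_sq_real u' v'
  have hA := stepA' (norm_nonneg u) (norm_nonneg v) hε (norm_nonneg (u - v))
    (norm_sub_le u v) hIr hIr' h1 h2 h3
  rw [expand_sq, expand_sq]
  exact core' (norm_nonneg u) (norm_nonneg v) hε hs hsq hsp hc hc1 hI h1 h2 hA

private lemma tri_facts' {α : ℝ} (hα : 0 < α) (A B C : V2)
    (hind : AffineIndependent ℝ ![A, B, C])
    (h1 : α ≤ ∠ A B C) (h2 : α ≤ ∠ B C A) (h3 : α ≤ ∠ C A B) :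
    Real.sin α * ‖C - A‖ ≤ ‖B - A‖ ∧ Real.sin α * ‖B - A‖ ≤ ‖C - A‖ ∧
      |⟪B - A, C - A⟫| ≤ Real.cos α * (‖B - A‖ * ‖C - A‖) ∧ α ≤ Real.pi / 3 := by
  have hBA : B ≠ A := by
    have := hind.injective.ne (show (1 : Fin 3) ≠ 0 by decide)
    simpa using this
  have hCA : C ≠ A := by
    have := hind.injective.ne (show (2 : Fin 3) ≠ 0 by decide)
    simpa using this
  have hCB : C ≠ B := by
    have := hind.injective.ne (show (2 : Fin 3) ≠ 1 by decide)
    simpa using this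
  have hsum : ∠ A B C + ∠ B C A + ∠ C A B = Real.pi :=
    EuclideanGeometry.angle_add_angle_add_angle_eq_pi C hBA
  have hα3 : α ≤ Real.pi / 3 := by linarith
  have hθB : ∠ A B C ≤ Real.pi - α := by linarith
  have hθC : ∠ B C A ≤ Real.pi - α := by linarith
  have hθA : ∠ C A B ≤ Real.pi - α := by linarith
  have hy : (C : V2) - B ≠ 0 := sub_ne_zero.2 hCB
  have hls := sin_mul_norm_eq (A - B) (C - B) hy
  have e1 : -((C : V2) - B) = B - C := by abel
  have e2 : (A : V2) - B - (C - B) = A - C := by abel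
  rw [e1, e2] at hls
  have hang1 : InnerProductGeometry.angle ((A : V2) - B) (C - B) = ∠ A B C := by
    rw [EuclideanGeometry.angle, vsub_eq_sub, vsub_eq_sub]
  have hang2 : InnerProductGeometry.angle ((B : V2) - C) (A - C) = ∠ B C A := by
    rw [EuclideanGeometry.angle, vsub_eq_sub, vsub_eq_sub]
  rw [hang1, hang2] at hls
  have hnAB : ‖(A : V2) - B‖ = ‖B - A‖ := norm_sub_rev _ _
  have hnAC : ‖(A : V2) - C‖ = ‖C - A‖ := norm_sub_rev _ _
  rw [hnAB, hnAC] at hls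
  have hsinB : Real.sin α ≤ Real.sin (∠ A B C) := sin_lb' hα h1 hθB
  have hsinC : Real.sin α ≤ Real.sin (∠ B C A) := sin_lb' hα h2 hθC
  have hsinB1 : Real.sin (∠ A B C) ≤ 1 := Real.sin_le_one _
  have hsinC1 : Real.sin (∠ B C A) ≤ 1 := Real.sin_le_one _
  have hnCA : (0:ℝ) ≤ ‖(C : V2) - A‖ := norm_nonneg _
  have hnBA : (0:ℝ) ≤ ‖(B : V2) - A‖ := norm_nonneg _
  refine ⟨?_, ?_, ?_, hα3⟩
  · calc Real.sin α * ‖(C : V2) - A‖ ≤ Real.sin (∠ B C A) * ‖(C : V2) - A‖ :=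
        mul_le_mul_of_nonneg_right hsinC hnCA
      _ = Real.sin (∠ A B C) * ‖(B : V2) - A‖ := hls.symm
      _ ≤ 1 * ‖(B : V2) - A‖ := mul_le_mul_of_nonneg_right hsinB1 hnBA
      _ = ‖(B : V2) - A‖ := one_mul _
  · calc Real.sin α * ‖(B : V2) - A‖ ≤ Real.sin (∠ A B C) * ‖(B : V2) - A‖ :=
        mul_le_mul_of_nonneg_right hsinB hnBA
      _ = Real.sin (∠ B C A) * ‖(C : V2) - A‖ := hls
      _ ≤ 1 * ‖(C : V2) - A‖ := mul_le_mul_of_nonneg_right hsinC1 hnCA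
      _ = ‖(C : V2) - A‖ := one_mul _
  · have hangA : InnerProductGeometry.angle ((B : V2) - A) (C - A) = ∠ C A B := by
      rw [show ∠ C A B = InnerProductGeometry.angle ((C : V2) - A) (B - A) by
        rw [EuclideanGeometry.angle, vsub_eq_sub, vsub_eq_sub]]
      exact InnerProductGeometry.angle_comm _ _
    have hcos := InnerProductGeometry.cos_angle_mul_norm_mul_norm ((B : V2) - A) (C - A)
    rw [hangA] at hcos
    rw [← hcos, abs_mul, abs_of_nonneg (mul_nonneg hnBA hnCA)]
    exact mul_le_mul_of_nonneg_right (abs_cos_le' hα h3 hθA) (mul_nonneg hnBA hnCA)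

private lemma li_of_affineIndep' {A B C : V2} (hind : AffineIndependent ℝ ![A, B, C]) :
    LinearIndependent ℝ ![B - A, C - A] := by
  have h := (affineIndependent_iff_linearIndependent_vsub ℝ ![A, B, C] 0).mp hind
  have hg : Function.Injective
      (fun i : Fin 2 => (![(⟨1, by decide⟩ : {x : Fin 3 // x ≠ 0}), ⟨2, by decide⟩] i)) := by
    intro i j hij
    fin_cases i <;> fin_cases j <;> simp_all
  have h2 := h.comp _ hg
  convert h2 using 1
  funext i
  fin_cases i <;> simp [vsub_eq_sub]
  rfl

private noncomputable def myT' {A B C : V2} (hind : AffineIndependent ℝ ![A, B, C])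
    (u' v' : V2) : V2 →ₗ[ℝ] V2 :=
  (basisOfLinearIndependentOfCardEqFinrank (li_of_affineIndep' hind)
    (by simp [finrank_euclideanSpace_fin])).constr ℝ ![u', v']

private lemma myT_spec' {A B C : V2} (hind : AffineIndependent ℝ ![A, B, C]) (u' v' : V2) :
    myT' hind u' v' (B - A) = u' ∧ myT' hind u' v' (C - A) = v' ∧
      ∀ w : V2, ∃ a b : ℝ, w = a • (B - A) + b • (C - A) ∧
        myT' hind u' v' w = a • u' + b • v' := by
  set bb := basisOfLinearIndependentOfCardEqFinrank (li_of_affineIndep' hind)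
    (by simp [finrank_euclideanSpace_fin]) with hbb
  have hcoe : ⇑bb = ![B - A, C - A] :=
    coe_basisOfLinearIndependentOfCardEqFinrank _ _
  have hb0 : bb 0 = B - A := by rw [hcoe]; rfl
  have hb1 : bb 1 = C - A := by rw [hcoe]; rfl
  have hT0 : myT' hind u' v' (bb 0) = u' := bb.constr_basis ℝ ![u', v'] 0
  have hT1 : myT' hind u' v' (bb 1) = v' := bb.constr_basis ℝ ![u', v'] 1
  refine ⟨by rw [← hb0]; exact hT0, by rw [← hb1]; exact hT1, fun w => ?_⟩
  refine ⟨bb.repr w 0, bb.repr w 1, ?_, ?_⟩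
  · have := bb.sum_repr w
    rw [Fin.sum_univ_two, hb0, hb1] at this
    exact this.symm
  · have hw : w = bb.repr w 0 • bb 0 + bb.repr w 1 • bb 1 := by
      have := bb.sum_repr w
      rw [Fin.sum_univ_two] at this
      exact this.symm
    conv_lhs => rw [hw]
    rw [map_add, map_smul, map_smul, hT0, hT1]

/-- Two nondegenerate plane triangles with all angles at least `α > 0` whose corresponding
side lengths differ by ratios at most `1 + δ` admit an affine `L(δ)`-bi-Lipschitz map of one
onto the other with vertices going to vertices, where `L` depends only on `α` and `δ`, and
`L(δ) → 1` as `δ → 0⁺`. -/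
theorem affine_biLipschitz_of_close_triangles (α : ℝ) (hα : 0 < α) :
    ∃ L : ℝ → ℝ, (∀ δ : ℝ, 0 < δ → 1 ≤ L δ) ∧
      Tendsto L (𝓝[>] 0) (𝓝 1) ∧
      ∀ δ : ℝ, 0 < δ → ∀ A B C A' B' C' : EuclideanSpace ℝ (Fin 2),
        AffineIndependent ℝ ![A, B, C] → AffineIndependent ℝ ![A', B', C'] →
        α ≤ ∠ A B C → α ≤ ∠ B C A → α ≤ ∠ C A B →
        α ≤ ∠ A' B' C' → α ≤ ∠ B' C' A' → α ≤ ∠ C' A' B' →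
        ((1 + δ)⁻¹ ≤ dist A' B' / dist A B ∧ dist A' B' / dist A B ≤ 1 + δ) →
        ((1 + δ)⁻¹ ≤ dist B' C' / dist B C ∧ dist B' C' / dist B C ≤ 1 + δ) →
        ((1 + δ)⁻¹ ≤ dist C' A' / dist C A ∧ dist C' A' / dist C A ≤ 1 + δ) →
        ∃ f : EuclideanSpace ℝ (Fin 2) →ᵃ[ℝ] EuclideanSpace ℝ (Fin 2),
          f A = A' ∧ f B = B' ∧ f C = C' ∧
          ∀ x ∈ convexHull ℝ {A, B, C}, ∀ y ∈ convexHull ℝ {A, B, C},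
            (L δ)⁻¹ * dist x y ≤ dist (f x) (f y) ∧ dist (f x) (f y) ≤ L δ * dist x y := by
  set K : ℝ := (5 / 2) * (1 + ((Real.sin α)⁻¹) ^ 2) / (1 - Real.cos α) with hK
  have hK0 : 0 ≤ K := by
    apply div_nonneg (by positivity)
    linarith [Real.cos_le_one α]
  refine ⟨fun δ => Real.sqrt (1 + K * ((1 + δ) ^ 2 - 1)), ?_, ?_, ?_⟩
  · intro δ hδ
    have h1 : 1 ≤ 1 + K * ((1 + δ) ^ 2 - 1) := by
      nlinarith [mul_nonneg hK0 (by nlinarith : (0:ℝ) ≤ (1 + δ) ^ 2 - 1)]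
    calc (1:ℝ) = Real.sqrt 1 := Real.sqrt_one.symm
      _ ≤ _ := Real.sqrt_le_sqrt h1
  · have hcont : Continuous (fun δ : ℝ => Real.sqrt (1 + K * ((1 + δ) ^ 2 - 1))) :=
      Real.continuous_sqrt.comp (by continuity)
    have h0 := (hcont.tendsto 0).mono_left (nhdsWithin_le_nhds (s := Set.Ioi (0:ℝ)))
    simpa using h0
  · intro δ hδ A B C A' B' C' hT hT' a1 a2 a3 b1 b2 b3 r1 r2 r3
    obtain ⟨f1a, f1b, f1c, hα3⟩ := tri_facts' hα A B C hT a1 a2 a3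
    obtain ⟨f2a, f2b, f2c, -⟩ := tri_facts' hα A' B' C' hT' b1 b2 b3
    have hπ := Real.pi_pos
    have hs : 0 < Real.sin α := Real.sin_pos_of_pos_of_lt_pi hα (by linarith)
    have hc0 : 0 ≤ Real.cos α := Real.cos_nonneg_of_mem_Icc ⟨by linarith, by linarith⟩
    have hc1 : Real.cos α < 1 := by
      have := Real.strictAntiOn_cos (Set.mem_Icc.2 ⟨le_rfl, hπ.le⟩)
        (Set.mem_Icc.2 ⟨hα.le, by linarith⟩) hα
      simpa using this
    -- distinct points
    have hAB : A ≠ B := by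
      have := hT.injective.ne (show (0 : Fin 3) ≠ 1 by decide); simpa using this
    have hBC : B ≠ C := by
      have := hT.injective.ne (show (1 : Fin 3) ≠ 2 by decide); simpa using this
    have hCA : C ≠ A := by
      have := hT.injective.ne (show (2 : Fin 3) ≠ 0 by decide); simpa using this
    -- side length square bounds
    have hε0 : (0:ℝ) ≤ (1 + δ) ^ 2 - 1 := by nlinarith
    obtain ⟨sAB, sAB', -⟩ := ratio_sq' (dist_pos.2 hAB) hδ r1.1 r1.2
    obtain ⟨sBC, sBC', -⟩ := ratio_sq' (dist_pos.2 hBC) hδ r2.1 r2.2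
    obtain ⟨sCA, sCA', -⟩ := ratio_sq' (dist_pos.2 hCA) hδ r3.1 r3.2
    -- express distances as norms of difference vectors based at A resp. A'
    have dAB : dist A B = ‖B - A‖ := by rw [dist_eq_norm, norm_sub_rev]
    have dAB' : dist A' B' = ‖B' - A'‖ := by rw [dist_eq_norm, norm_sub_rev]
    have dCA : dist C A = ‖C - A‖ := dist_eq_norm _ _
    have dCA' : dist C' A' = ‖C' - A'‖ := dist_eq_norm _ _
    have dBC : dist B C = ‖(B - A) - (C - A)‖ := by
      rw [dist_eq_norm]; congr 1; abel
    have dBC' : dist B' C' = ‖(B' - A') - (C' - A')‖ := by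
      rw [dist_eq_norm]; congr 1; abel
    rw [dAB, dAB'] at sAB sAB'
    rw [dBC, dBC'] at sBC sBC'
    rw [dCA, dCA'] at sCA sCA'
    -- quadratic form bounds in both directions
    have hq1 := quad_bound' (B - A) (C - A) (B' - A') (C' - A') ((1 + δ) ^ 2 - 1)
      (Real.sin α) (Real.cos α) hε0 hs f1a f1b hc0 hc1 f1c sAB sCA sBC
    have hq2 := quad_bound' (B' - A') (C' - A') (B - A) (C - A) ((1 + δ) ^ 2 - 1)
      (Real.sin α) (Real.cos α) hε0 hs f2a f2b hc0 hc1 f2c sAB' sCA' sBC'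
    -- the linear map and affine map
    obtain ⟨hTu, hTv, hTrep⟩ := myT_spec' hT (B' - A') (C' - A')
    set T := myT' hT (B' - A') (C' - A') with hTdef
    set Lδ : ℝ := Real.sqrt (1 + K * ((1 + δ) ^ 2 - 1)) with hLδ
    have hL2' : (0:ℝ) ≤ 1 + K * ((1 + δ) ^ 2 - 1) := by nlinarith
    have hL2 : Lδ ^ 2 = 1 + K * ((1 + δ) ^ 2 - 1) := Real.sq_sqrt hL2'
    have hL1 : 1 ≤ Lδ := by
      rw [hLδ]
      calc (1:ℝ) = Real.sqrt 1 := Real.sqrt_one.symm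
        _ ≤ _ := Real.sqrt_le_sqrt (by nlinarith)
    have hLpos : 0 < Lδ := by linarith
    have key : ∀ w : V2, ‖T w‖ ≤ Lδ * ‖w‖ ∧ ‖w‖ ≤ Lδ * ‖T w‖ := by
      intro w
      obtain ⟨a, b, hw, hTw⟩ := hTrep w
      have k1 : ‖T w‖ ^ 2 ≤ (Lδ * ‖w‖) ^ 2 := by
        rw [mul_pow, hL2, hTw]
        conv_rhs => rw [hw]
        rw [hK]
        exact hq1 a b
      have k2 : ‖w‖ ^ 2 ≤ (Lδ * ‖T w‖) ^ 2 := by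
        rw [mul_pow, hL2, hTw]
        conv_lhs => rw [hw]
        rw [hK]
        exact hq2 a b
      constructor
      · have := Real.sqrt_le_sqrt k1
        rwa [Real.sqrt_sq (norm_nonneg _),
          Real.sqrt_sq (mul_nonneg hLpos.le (norm_nonneg _))] at this
      · have := Real.sqrt_le_sqrt k2
        rwa [Real.sqrt_sq (norm_nonneg _),
          Real.sqrt_sq (mul_nonneg hLpos.le (norm_nonneg _))] at this
    -- the affine map
    have hmk : ∀ p' : V2, T (p' - A) + A' = T (p' -ᵥ A) +ᵥ (T (A - A) + A') := by
      intro p'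
      simp [vsub_eq_sub, vadd_eq_add, sub_self, map_zero]
    refine ⟨AffineMap.mk' (fun x => T (x - A) + A') T A (fun p' => by
      simpa using hmk p'), ?_, ?_, ?_, ?_⟩
    · show T (A - A) + A' = A'
      simp
    · show T (B - A) + A' = B'
      rw [hTu]; abel
    · show T (C - A) + A' = C'
      rw [hTv]; abel
    · intro x _ y _
      have e : T (x - A) + A' - (T (y - A) + A') = T (x - y) := by
        calc T (x - A) + A' - (T (y - A) + A') = T (x - A) - T (y - A) := by abel
          _ = T ((x - A) - (y - A)) := (map_sub T _ _).symm
          _ = T (x - y) := by congr 1; abel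
      have hfd : dist (T (x - A) + A') (T (y - A) + A') = ‖T (x - y)‖ := by
        rw [dist_eq_norm, e]
      have hd : dist x y = ‖x - y‖ := dist_eq_norm _ _
      obtain ⟨k1, k2⟩ := key (x - y)
      constructor
      · show Lδ⁻¹ * dist x y ≤ dist (T (x - A) + A') (T (y - A) + A')
        rw [hfd, hd, inv_mul_le_iff₀ hLpos]
        exact k2
      · show dist (T (x - A) + A') (T (y - A) + A') ≤ Lδ * dist x y
        rw [hfd, hd]
        exact k1
end

section
/- Any two nondegenerate triangles in the Euclidean plane all of whose angles are at least α > 0 and whose diameters lie in the interval [d, D] (with 0 < d ≤ D) are L-bi-Lipschitz equivalent via an affine map, where L depends only on α and D/d. -/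
open EuclideanGeometry InnerProductGeometry Real RealInnerProductSpace

section Helpers
variable {V : Type*} [NormedAddCommGroup V] [InnerProductSpace ℝ V]

theorem my_sin_le (β θ : ℝ) (h0 : 0 ≤ β) (h1 : β ≤ θ) (h2 : θ ≤ π - β) :
    Real.sin β ≤ Real.sin θ := by
  rcases le_total θ (π/2) with h | h
  · exact Real.sin_le_sin_of_le_of_le_pi_div_two (by linarith) h h1
  · rw [← Real.sin_pi_sub θ]
    exact Real.sin_le_sin_of_le_of_le_pi_div_two (by linarith) (by linarith) (by linarith)

theorem my_abs_cos (β θ : ℝ) (h0 : 0 ≤ β) (h1 : β ≤ θ) (h2 : θ ≤ π - β) :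
    |Real.cos θ| ≤ Real.cos β := by
  rw [abs_le]
  refine ⟨?_, Real.cos_le_cos_of_nonneg_of_le_pi h0 (by linarith) h1⟩
  rw [← Real.cos_pi_sub]
  exact Real.cos_le_cos_of_nonneg_of_le_pi (by linarith) (by linarith) (by linarith)

theorem my_sinrule (u v : V) :
    Real.sin (angle u v) * (‖u‖ * ‖v‖) = Real.sin (angle (-u) (v - u)) * (‖-u‖ * ‖v - u‖) := by
  rw [sin_angle_mul_norm_mul_norm, sin_angle_mul_norm_mul_norm]
  congr 1
  simp only [inner_neg_neg, inner_neg_left, inner_neg_right, inner_sub_left, inner_sub_right,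
    real_inner_comm u v]
  ring

theorem my_coef (u v : V) (s t : ℝ) :
    (1 - |Real.cos (angle u v)|) * (s^2 * ‖u‖^2) ≤ ‖s • u + t • v‖^2 := by
  have h := cos_angle_mul_norm_mul_norm u v
  have habs : |Real.cos (angle u v)| ≤ 1 := abs_cos_le_one _
  set c := |Real.cos (angle u v)| with hc
  have hexp : ‖s • u + t • v‖^2 = s^2*‖u‖^2 + t^2*‖v‖^2 + 2*s*t*(⟪u,v⟫ : ℝ) := by
    rw [← real_inner_self_eq_norm_sq]
    simp only [inner_add_add_self, real_inner_smul_left, real_inner_smul_right,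
      real_inner_self_eq_norm_sq, real_inner_comm v u, norm_smul, Real.norm_eq_abs, mul_pow,
      sq_abs]
    ring
  have hsum : |s| * |t| * (‖u‖ * ‖v‖) * 2 ≤ s^2*‖u‖^2 + t^2*‖v‖^2 := by
    nlinarith [sq_nonneg (|s| * ‖u‖ - |t| * ‖v‖), abs_nonneg s, abs_nonneg t,
      norm_nonneg u, norm_nonneg v, sq_abs s, sq_abs t,
      mul_nonneg (abs_nonneg s) (norm_nonneg u), mul_nonneg (abs_nonneg t) (norm_nonneg v)]
  have h2 : |2*s*t*(Real.cos (angle u v) * (‖u‖ * ‖v‖))| ≤ c * (s^2*‖u‖^2 + t^2*‖v‖^2) := by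
    rw [abs_mul, abs_mul, abs_mul, abs_mul, abs_two,
      abs_of_nonneg (mul_nonneg (norm_nonneg u) (norm_nonneg v))]
    calc 2 * |s| * |t| * (c * (‖u‖ * ‖v‖)) = c * (|s| * |t| * (‖u‖ * ‖v‖) * 2) := by ring
      _ ≤ c * (s^2*‖u‖^2 + t^2*‖v‖^2) := mul_le_mul_of_nonneg_left hsum (abs_nonneg _)
  have key : -(c * (s^2*‖u‖^2 + t^2*‖v‖^2)) ≤ 2*s*t*(⟪u,v⟫ : ℝ) := by
    rw [← h]
    have := neg_abs_le (2*s*t*(Real.cos (angle u v) * (‖u‖ * ‖v‖)))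
    linarith
  have h4 : 0 ≤ (1 - c) * (t^2 * ‖v‖^2) :=
    mul_nonneg (by linarith) (mul_nonneg (sq_nonneg t) (sq_nonneg _))
  rw [hexp]
  nlinarith [key, h4]

set_option maxHeartbeats 1000000 in
theorem tri_facts (β d D : ℝ) (hβ0 : 0 < β) (hβ3 : β ≤ π/3) (hd : 0 < d)
    (A B C : EuclideanSpace ℝ (Fin 2))
    (hind : AffineIndependent ℝ ![A, B, C])
    (h1 : β ≤ ∠ A B C) (h2 : β ≤ ∠ B C A) (h3 : β ≤ ∠ C A B)
    (hdlo : d ≤ Metric.diam ({A, B, C} : Set (EuclideanSpace ℝ (Fin 2))))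
    (hDhi : Metric.diam ({A, B, C} : Set (EuclideanSpace ℝ (Fin 2))) ≤ D) :
    LinearIndependent ℝ ![B - A, C - A] ∧ ‖B - A‖ ≤ D ∧ ‖C - A‖ ≤ D ∧
    ∀ s t : ℝ, |s| * (d * Real.sin β * Real.sqrt (1 - Real.cos β)) ≤ ‖s • (B - A) + t • (C - A)‖
      ∧ |t| * (d * Real.sin β * Real.sqrt (1 - Real.cos β)) ≤ ‖s • (B - A) + t • (C - A)‖ := by
  have hπ : (3:ℝ) < π := Real.pi_gt_three
  have hβπ2 : β ≤ π/2 := by linarith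
  -- distinctness
  have hBA : B ≠ A := by
    intro h; exact (by decide : (1:Fin 3) ≠ 0) (hind.injective (by simp [h]))
  have hCA : C ≠ A := by
    intro h; exact (by decide : (2:Fin 3) ≠ 0) (hind.injective (by simp [h]))
  have hCB : C ≠ B := by
    intro h; exact (by decide : (2:Fin 3) ≠ 1) (hind.injective (by simp [h]))
  set u := B - A with hu
  set v := C - A with hv
  -- linear independence
  have hli : LinearIndependent ℝ ![u, v] := by
    rw [Fintype.linearIndependent_iff]
    intro g hg
    have h0 := affineIndependent_iff.1 hind Finset.univ ![-(g 0) - g 1, g 0, g 1]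
      (by simp [Fin.sum_univ_three]; ring)
      (by
        simp only [Fin.sum_univ_three, Matrix.cons_val_zero, Matrix.cons_val_one,
          Matrix.head_cons, Matrix.cons_val_two, Matrix.tail_cons]
        have := hg
        simp only [Fin.sum_univ_two, Matrix.cons_val_zero, Matrix.cons_val_one,
          Matrix.head_cons, hu, hv, smul_sub] at this
        rw [sub_smul, neg_smul]
        abel_nf
        abel_nf at this
        linear_combination (norm := module) this)
    intro i
    fin_cases i
    · simpa using h0 1 (Finset.mem_univ _)
    · simpa using h0 2 (Finset.mem_univ _)
  -- angles
  have hsum : ∠ A B C + ∠ B C A + ∠ C A B = π :=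
    angle_add_angle_add_angle_eq_pi C hBA
  -- angle range facts
  have hA2 : ∠ C A B ≤ π - β := by linarith
  have hB2 : ∠ A B C ≤ π - β := by linarith
  have hC2 : ∠ B C A ≤ π - β := by linarith
  have hsβ : 0 < Real.sin β := Real.sin_pos_of_pos_of_lt_pi hβ0 (by linarith)
  have hsβ1 : Real.sin β ≤ 1 := Real.sin_le_one β
  have hsA : Real.sin β ≤ Real.sin (∠ C A B) := my_sin_le β _ hβ0.le h3 hA2
  have hsB : Real.sin β ≤ Real.sin (∠ A B C) := my_sin_le β _ hβ0.le h1 hB2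
  have hsC : Real.sin β ≤ Real.sin (∠ B C A) := my_sin_le β _ hβ0.le h2 hC2
  have hsA1 : Real.sin (∠ C A B) ≤ 1 := Real.sin_le_one _
  have hsB1 : Real.sin (∠ A B C) ≤ 1 := Real.sin_le_one _
  have hsC1 : Real.sin (∠ B C A) ≤ 1 := Real.sin_le_one _
  -- identify vector angles with point angles
  have hAngA : InnerProductGeometry.angle u v = ∠ C A B := by
    rw [EuclideanGeometry.angle, vsub_eq_sub, vsub_eq_sub, InnerProductGeometry.angle_comm]
  have hAngB : InnerProductGeometry.angle (-u) (v - u) = ∠ A B C := by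
    rw [EuclideanGeometry.angle, vsub_eq_sub, vsub_eq_sub, hu, hv, neg_sub,
      sub_sub_sub_cancel_right]
  have hAngC : InnerProductGeometry.angle (-v) (u - v) = ∠ B C A := by
    rw [EuclideanGeometry.angle, vsub_eq_sub, vsub_eq_sub, hu, hv, neg_sub,
      sub_sub_sub_cancel_right, InnerProductGeometry.angle_comm]
  -- side lengths
  set a := ‖u‖ with ha'
  set bb := ‖v‖ with hbb'
  set cc := ‖v - u‖ with hcc'
  have ha : 0 < a := by rw [ha', norm_pos_iff, hu, sub_ne_zero]; exact hBA
  have hbb : 0 < bb := by rw [hbb', norm_pos_iff, hv, sub_ne_zero]; exact hCA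
  have hcc : 0 < cc := by
    rw [hcc', norm_pos_iff, hu, hv, sub_ne_zero]
    intro h; exact hCB (by linear_combination (norm := module) h)
  -- sin rules
  have E1 : Real.sin (∠ C A B) * (a * bb) = Real.sin (∠ A B C) * (a * cc) := by
    have := my_sinrule u v
    rwa [hAngA, hAngB, norm_neg] at this
  have E2 : Real.sin (∠ C A B) * (bb * a) = Real.sin (∠ B C A) * (bb * cc) := by
    have := my_sinrule v u
    rwa [InnerProductGeometry.angle_comm, hAngA, hAngC, norm_neg, norm_sub_rev u v, ← hcc']
      at this
  have I1 : Real.sin (∠ C A B) * bb = Real.sin (∠ A B C) * cc :=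
    mul_left_cancel₀ ha.ne' (by linear_combination E1)
  have I2 : Real.sin (∠ C A B) * a = Real.sin (∠ B C A) * cc :=
    mul_left_cancel₀ hbb.ne' (by linear_combination E2)
  have I3 : Real.sin (∠ A B C) * a = Real.sin (∠ B C A) * bb :=
    mul_left_cancel₀ hcc.ne' (by linear_combination bb * I2 - a * I1)
  -- diameter
  have hdiam : Metric.diam ({A, B, C} : Set (EuclideanSpace ℝ (Fin 2)))
      = max (max a bb) cc := by
    rw [Metric.diam_triple, dist_eq_norm, dist_eq_norm, dist_eq_norm, ha', hbb', hcc',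
      hu, hv, sub_sub_sub_cancel_right, norm_sub_rev A B, norm_sub_rev A C, norm_sub_rev B C]
  have hmax : d ≤ max (max a bb) cc := hdiam ▸ hdlo
  have haD : a ≤ D := by
    refine le_trans ?_ (hdiam ▸ hDhi); apply le_max_of_le_left; exact le_max_left _ _
  have hbD : bb ≤ D := by
    refine le_trans ?_ (hdiam ▸ hDhi); apply le_max_of_le_left; exact le_max_right _ _
  -- side lower bounds
  have hlowa : d * Real.sin β ≤ a := by
    rcases le_max_iff.1 hmax with h' | h'
    · rcases le_max_iff.1 h' with h'' | h''
      · nlinarith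
      · nlinarith [I3, mul_le_mul h'' hsC hsβ.le (le_trans hd.le h'')]
    · nlinarith [I2, mul_le_mul h' hsC hsβ.le (le_trans hd.le h')]
  have hlowb : d * Real.sin β ≤ bb := by
    rcases le_max_iff.1 hmax with h' | h'
    · rcases le_max_iff.1 h' with h'' | h''
      · nlinarith [I3, mul_le_mul h'' hsB hsβ.le (le_trans hd.le h'')]
      · nlinarith
    · nlinarith [I1, mul_le_mul h' hsB hsβ.le (le_trans hd.le h')]
  -- cos bound
  have hcβ1 : Real.cos β < 1 := by
    have := Real.cos_lt_cos_of_nonneg_of_le_pi (le_refl 0) (by linarith) hβ0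
    rwa [Real.cos_zero] at this
  have hcosA : |Real.cos (InnerProductGeometry.angle u v)| ≤ Real.cos β := by
    rw [hAngA]; exact my_abs_cos β _ hβ0.le h3 hA2
  refine ⟨hli, haD, hbD, ?_⟩
  intro s t
  have hq : 0 ≤ 1 - Real.cos β := by linarith
  constructor
  · have hc1 := my_coef u v s t
    have : (1 - Real.cos β) * (s^2 * a^2) ≤ ‖s • u + t • v‖^2 := by
      refine le_trans ?_ hc1
      apply mul_le_mul_of_nonneg_right (by linarith [hcosA]) (by positivity)
    have hnn : 0 ≤ |s| * (d * Real.sin β * Real.sqrt (1 - Real.cos β)) := by positivity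
    rw [← Real.sqrt_sq (norm_nonneg (s • u + t • v)), ← Real.sqrt_sq hnn]
    apply Real.sqrt_le_sqrt
    have hsq : (|s| * (d * Real.sin β * Real.sqrt (1 - Real.cos β)))^2
        = (1 - Real.cos β) * (s^2 * (d * Real.sin β)^2) := by
      rw [mul_pow, mul_pow, mul_pow, Real.sq_sqrt hq, sq_abs]
      ring
    rw [hsq]
    refine le_trans ?_ this
    apply mul_le_mul_of_nonneg_left ?_ hq
    apply mul_le_mul_of_nonneg_left ?_ (sq_nonneg s)
    exact pow_le_pow_left₀ (by positivity) hlowa 2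
  · have hc1 := my_coef v u t s
    rw [InnerProductGeometry.angle_comm] at hc1
    rw [add_comm] at hc1
    have : (1 - Real.cos β) * (t^2 * bb^2) ≤ ‖s • u + t • v‖^2 := by
      refine le_trans ?_ hc1
      apply mul_le_mul_of_nonneg_right (by linarith [hcosA]) (by positivity)
    have hnn : 0 ≤ |t| * (d * Real.sin β * Real.sqrt (1 - Real.cos β)) := by positivity
    rw [← Real.sqrt_sq (norm_nonneg (s • u + t • v)), ← Real.sqrt_sq hnn]
    apply Real.sqrt_le_sqrt
    have hsq : (|t| * (d * Real.sin β * Real.sqrt (1 - Real.cos β)))^2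
        = (1 - Real.cos β) * (t^2 * (d * Real.sin β)^2) := by
      rw [mul_pow, mul_pow, mul_pow, Real.sq_sqrt hq, sq_abs]
      ring
    rw [hsq]
    refine le_trans ?_ this
    apply mul_le_mul_of_nonneg_left ?_ hq
    apply mul_le_mul_of_nonneg_left ?_ (sq_nonneg t)
    exact pow_le_pow_left₀ (by positivity) hlowb 2


theorem op_bound
    (b : Module.Basis (Fin 2) ℝ V) (u v u' v' : V) (hb0 : b 0 = u) (hb1 : b 1 = v)
    (m D K : ℝ) (hm : 0 < m) (hD : ‖u'‖ ≤ D) (hD' : ‖v'‖ ≤ D) (hK : 2 * D / m ≤ K)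
    (hbound : ∀ s t : ℝ, |s| * m ≤ ‖s • u + t • v‖ ∧ |t| * m ≤ ‖s • u + t • v‖)
    (w : V) : ‖(b.constr ℝ ![u', v'] : V →ₗ[ℝ] V) w‖ ≤ K * ‖w‖ := by
  set s := b.repr w 0 with hs
  set t := b.repr w 1 with ht
  have hw : s • u + t • v = w := by
    rw [← hb0, ← hb1]
    have := b.sum_repr w
    rwa [Fin.sum_univ_two] at this
  have hTw : (b.constr ℝ ![u', v'] : V →ₗ[ℝ] V) w = s • u' + t • v' := by
    rw [← hw, map_add, map_smul, map_smul, ← hb0, ← hb1, Module.Basis.constr_basis,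
      Module.Basis.constr_basis]
    simp
  have hD0 : 0 ≤ D := le_trans (norm_nonneg _) hD
  have hsb := (hbound s t).1
  have htb := (hbound s t).2
  rw [hw] at hsb htb
  have h1 : ‖(b.constr ℝ ![u', v'] : V →ₗ[ℝ] V) w‖ ≤ |s| * D + |t| * D := by
    rw [hTw]
    calc ‖s • u' + t • v'‖ ≤ ‖s • u'‖ + ‖t • v'‖ := norm_add_le _ _
      _ = |s| * ‖u'‖ + |t| * ‖v'‖ := by rw [norm_smul, norm_smul]; simp
      _ ≤ |s| * D + |t| * D := by
          exact add_le_add (mul_le_mul_of_nonneg_left hD (abs_nonneg _))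
            (mul_le_mul_of_nonneg_left hD' (abs_nonneg _))
  have h2 : |s| ≤ ‖w‖ / m := (le_div_iff₀ hm).2 hsb
  have h3 : |t| ≤ ‖w‖ / m := (le_div_iff₀ hm).2 htb
  calc ‖(b.constr ℝ ![u', v'] : V →ₗ[ℝ] V) w‖ ≤ |s| * D + |t| * D := h1
    _ ≤ (‖w‖ / m) * D + (‖w‖ / m) * D := by
        exact add_le_add (mul_le_mul_of_nonneg_right h2 hD0) (mul_le_mul_of_nonneg_right h3 hD0)
    _ = (2 * D / m) * ‖w‖ := by ring
    _ ≤ K * ‖w‖ := mul_le_mul_of_nonneg_right hK (norm_nonneg _)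

end Helpers

set_option maxHeartbeats 1000000 in
/-- Any two nondegenerate plane triangles with all angles at least `α > 0` and diameters
in `[d, D]` are `L`-bi-Lipschitz equivalent via an affine map sending vertices to vertices,
where `L` depends only on `α` and the ratio `D/d` (bounded here by `ρ`). -/
theorem affine_biLipschitz_of_thick_triangles (α ρ : ℝ) (hα : 0 < α) (hρ : 1 ≤ ρ) :
    ∃ L : ℝ, 1 ≤ L ∧
      ∀ d D : ℝ, 0 < d → d ≤ D → D ≤ ρ * d →
      ∀ A B C A' B' C' : EuclideanSpace ℝ (Fin 2),
        AffineIndependent ℝ ![A, B, C] → AffineIndependent ℝ ![A', B', C'] →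
        α ≤ ∠ A B C → α ≤ ∠ B C A → α ≤ ∠ C A B →
        α ≤ ∠ A' B' C' → α ≤ ∠ B' C' A' → α ≤ ∠ C' A' B' →
        d ≤ Metric.diam ({A, B, C} : Set (EuclideanSpace ℝ (Fin 2))) →
        Metric.diam ({A, B, C} : Set (EuclideanSpace ℝ (Fin 2))) ≤ D →
        d ≤ Metric.diam ({A', B', C'} : Set (EuclideanSpace ℝ (Fin 2))) →
        Metric.diam ({A', B', C'} : Set (EuclideanSpace ℝ (Fin 2))) ≤ D →
        ∃ f : EuclideanSpace ℝ (Fin 2) →ᵃ[ℝ] EuclideanSpace ℝ (Fin 2),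
          f A = A' ∧ f B = B' ∧ f C = C' ∧
          ∀ x ∈ convexHull ℝ {A, B, C}, ∀ y ∈ convexHull ℝ {A, B, C},
            L⁻¹ * dist x y ≤ dist (f x) (f y) ∧ dist (f x) (f y) ≤ L * dist x y := by
  have hπ : (3:ℝ) < π := Real.pi_gt_three
  set β := min α (π/3) with hβ
  have hβ0 : 0 < β := lt_min hα (by linarith)
  have hβ3 : β ≤ π/3 := min_le_right _ _
  have hβα : β ≤ α := min_le_left _ _
  have hsβ : 0 < Real.sin β := Real.sin_pos_of_pos_of_lt_pi hβ0 (by linarith)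
  have hcβ : Real.cos β < 1 := by
    have := Real.cos_lt_cos_of_nonneg_of_le_pi (le_refl 0) (by linarith) hβ0
    rwa [Real.cos_zero] at this
  set q := Real.sqrt (1 - Real.cos β) with hq'
  have hq : 0 < q := Real.sqrt_pos.2 (by linarith)
  set K := 2 * ρ / (Real.sin β * q) with hK'
  have hK0 : 0 < K := by positivity
  refine ⟨max 1 K, le_max_left _ _, ?_⟩
  set L := max 1 K with hL'
  have hL1 : (1:ℝ) ≤ L := le_max_left _ _
  have hL0 : (0:ℝ) < L := lt_of_lt_of_le one_pos hL1
  have hKL : K ≤ L := le_max_right _ _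
  intro d D hd hdD hDρ A B C A' B' C' hind hind' hA hB hC hA' hB' hC' hd1 hD1 hd2 hD2
  obtain ⟨hli, huD, hvD, hbound⟩ := tri_facts β d D hβ0 hβ3 hd A B C hind
    (le_trans hβα hA) (le_trans hβα hB) (le_trans hβα hC) hd1 hD1
  obtain ⟨hli', huD', hvD', hbound'⟩ := tri_facts β d D hβ0 hβ3 hd A' B' C' hind'
    (le_trans hβα hA') (le_trans hβα hB') (le_trans hβα hC') hd2 hD2
  have hcard : Fintype.card (Fin 2) = Module.finrank ℝ (EuclideanSpace ℝ (Fin 2)) := by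
    simp [finrank_euclideanSpace_fin]
  set b : Module.Basis (Fin 2) ℝ (EuclideanSpace ℝ (Fin 2)) :=
    basisOfLinearIndependentOfCardEqFinrank hli hcard with hb'
  have hb : ⇑b = ![B - A, C - A] := coe_basisOfLinearIndependentOfCardEqFinrank hli hcard
  set b2 : Module.Basis (Fin 2) ℝ (EuclideanSpace ℝ (Fin 2)) :=
    basisOfLinearIndependentOfCardEqFinrank hli' hcard with hb2'
  have hb2 : ⇑b2 = ![B' - A', C' - A'] := coe_basisOfLinearIndependentOfCardEqFinrank hli' hcard
  have hb0 : b 0 = B - A := by rw [hb]; simp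
  have hb1 : b 1 = C - A := by rw [hb]; simp
  have hb20 : b2 0 = B' - A' := by rw [hb2]; simp
  have hb21 : b2 1 = C' - A' := by rw [hb2]; simp
  set T : EuclideanSpace ℝ (Fin 2) →ₗ[ℝ] EuclideanSpace ℝ (Fin 2) :=
    b.constr ℝ ![B' - A', C' - A'] with hT'
  set S : EuclideanSpace ℝ (Fin 2) →ₗ[ℝ] EuclideanSpace ℝ (Fin 2) :=
    b2.constr ℝ ![B - A, C - A] with hS'
  have hTu : T (B - A) = B' - A' := by rw [← hb0, hT', Module.Basis.constr_basis]; simp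
  have hTv : T (C - A) = C' - A' := by rw [← hb1, hT', Module.Basis.constr_basis]; simp
  have hSu : S (B' - A') = B - A := by rw [← hb20, hS', Module.Basis.constr_basis]; simp
  have hSv : S (C' - A') = C - A := by rw [← hb21, hS', Module.Basis.constr_basis]; simp
  -- the bound `2*D/m ≤ K` with m = d * sin β * q
  set m := d * Real.sin β * q with hm'
  have hm : 0 < m := by positivity
  have h2DmK : 2 * D / m ≤ K := by
    rw [hK', hm', div_le_div_iff₀ (by positivity) (by positivity)]
    have : 0 < Real.sin β * q := by positivity
    nlinarith [mul_le_mul_of_nonneg_right hDρ this.le]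
  have hTbd : ∀ w, ‖T w‖ ≤ K * ‖w‖ :=
    op_bound b _ _ _ _ hb0 hb1 m D K hm huD' hvD' h2DmK hbound
  have hSbd : ∀ w, ‖S w‖ ≤ K * ‖w‖ :=
    op_bound b2 _ _ _ _ hb20 hb21 m D K hm huD hvD h2DmK hbound'
  -- S ∘ T = id
  have hST : ∀ w, S (T w) = w := by
    intro w
    have hw : b.repr w 0 • (B - A) + b.repr w 1 • (C - A) = w := by
      rw [← hb0, ← hb1]
      have := b.sum_repr w
      rwa [Fin.sum_univ_two] at this
    conv_lhs => rw [← hw]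
    rw [map_add, map_smul, map_smul, hTu, hTv, map_add, map_smul, map_smul, hSu, hSv, hw]
  -- the affine map
  set f : EuclideanSpace ℝ (Fin 2) →ᵃ[ℝ] EuclideanSpace ℝ (Fin 2) :=
    ⟨fun x => T (x - A) + A', T, by
      intro p w
      show T (w + p - A) + A' = T w + (T (p - A) + A')
      rw [add_sub_assoc, map_add, add_assoc]⟩ with hf'
  have hfx : ∀ x, f x = T (x - A) + A' := fun x => rfl
  have hfsub : ∀ x y, f x - f y = T (x - y) := by
    intro x y
    rw [hfx, hfx, add_sub_add_right_eq_sub, ← map_sub, sub_sub_sub_cancel_right]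
  refine ⟨f, ?_, ?_, ?_, ?_⟩
  · rw [hfx, sub_self, map_zero, zero_add]
  · rw [hfx, hTu]; abel
  · rw [hfx, hTv]; abel
  intro x _ y _
  constructor
  · have hxy : dist x y ≤ L * dist (f x) (f y) := by
      rw [dist_eq_norm, dist_eq_norm, hfsub]
      calc ‖x - y‖ = ‖S (T (x - y))‖ := by rw [hST]
        _ ≤ K * ‖T (x - y)‖ := hSbd _
        _ ≤ L * ‖T (x - y)‖ := mul_le_mul_of_nonneg_right hKL (norm_nonneg _)
    rw [inv_mul_le_iff₀ hL0]
    exact hxy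
  · rw [dist_eq_norm, dist_eq_norm, hfsub]
    calc ‖T (x - y)‖ ≤ K * ‖x - y‖ := hTbd _
      _ ≤ L * ‖x - y‖ := mul_le_mul_of_nonneg_right hKL (norm_nonneg _)
end
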